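/- arXiv:2404.03452 — 3 statements merged into one kernel-verified Lean document; each statement's English description precedes it below -/
import Mathlib

section
/- The function V(x) = |x|²(sin(e^{|x|}) + 2) + 1 on ℝ² does not satisfy the bound |∇V(x)| ≤ C·V(x)^{3/2} for any constant C: there is a sequence x_n with |x_n| → ∞ such that |∇V(x_n)|/V(x_n)^{3/2} → ∞. -/
/-!
`V` is radial, `V x = φ ‖x‖` with `φ t = t² (sin eᵗ + 2) + 1`, so `‖∇V x‖ = |φ' ‖x‖|`.
At the radii `tₙ = log (2π(n+1))` we have `sin e^{tₙ} = 0` and `cos e^{tₙ} = 1`,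
hence `V = 2tₙ² + 1` while `|φ' tₙ| = 4tₙ + tₙ² e^{tₙ}`, so the ratio is at least
`e^{tₙ} / (27 tₙ) → ∞`.
-/

open Real Filter

section Radial

variable {F : Type*} [NormedAddCommGroup F] [InnerProductSpace ℝ F]

theorem hasFDerivAt_norm {x : F} (hx : x ≠ 0) :
    HasFDerivAt (fun y : F => ‖y‖) (‖x‖⁻¹ • innerSL ℝ x) x := by
  have hsq : ‖x‖ ^ 2 ≠ 0 := by positivity
  have h := (hasDerivAt_sqrt hsq).comp_hasFDerivAt x (hasStrictFDerivAt_norm_sq x).hasFDerivAt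
  simp only [Function.comp_def, sqrt_sq (norm_nonneg _)] at h
  refine h.congr_fderiv ?_
  ext v
  simp only [one_div, mul_inv_rev, smul_apply, coe_innerSL_apply,
    nsmul_eq_mul, Nat.cast_ofNat, smul_eq_mul]
  field_simp

variable [CompleteSpace F]

theorem hasGradientAt_comp_norm {φ : ℝ → ℝ} {φ' : ℝ} {x : F} (hx : x ≠ 0)
    (hφ : HasDerivAt φ φ' ‖x‖) :
    HasGradientAt (fun y : F => φ ‖y‖) ((φ' / ‖x‖) • x) x := by
  rw [hasGradientAt_iff_hasFDerivAt]
  refine (hφ.comp_hasFDerivAt x (hasFDerivAt_norm hx)).congr_fderiv ?_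
  ext v
  simp only [smul_apply, coe_innerSL_apply, smul_eq_mul, map_smul,
    InnerProductSpace.toDual_apply_apply]
  ring

theorem norm_gradient_comp_norm {φ : ℝ → ℝ} {φ' : ℝ} {x : F} (hx : x ≠ 0)
    (hφ : HasDerivAt φ φ' ‖x‖) :
    ‖gradient (fun y : F => φ ‖y‖) x‖ = |φ'| := by
  rw [(hasGradientAt_comp_norm hx hφ).gradient, norm_smul, norm_div, norm_norm,
    div_mul_cancel₀ _ (norm_ne_zero_iff.mpr hx), norm_eq_abs]

end Radial

noncomputable section

def profile (t : ℝ) : ℝ := t ^ 2 * (sin (exp t) + 2) + 1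

theorem hasDerivAt_profile (t : ℝ) :
    HasDerivAt profile (2 * t * (sin (exp t) + 2) + t ^ 2 * (cos (exp t) * exp t)) t := by
  have h := ((hasDerivAt_pow 2 t).mul ((hasDerivAt_exp t).sin.add_const 2)).add_const 1
  exact h.congr_deriv (by ring)

def resonance (n : ℕ) : ℝ := log (2 * π * (n + 1))

theorem cos_exp_resonance (n : ℕ) : cos (exp (resonance n)) = 1 := by
  have h : 2 * π * ((n : ℝ) + 1) = (n + 1 : ℕ) * (2 * π) := by push_cast; ring
  rw [resonance, exp_log (by positivity), h, cos_nat_mul_two_pi]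

theorem sin_exp_resonance (n : ℕ) : sin (exp (resonance n)) = 0 :=
  sin_eq_zero_iff_cos_eq.mpr (.inl (cos_exp_resonance n))

theorem one_le_resonance (n : ℕ) : 1 ≤ resonance n := by
  rw [resonance, le_log_iff_exp_le (by positivity)]
  have : (1 : ℝ) ≤ n + 1 := by simp
  nlinarith [exp_one_lt_d9, pi_gt_three]

theorem resonance_pos (n : ℕ) : 0 < resonance n :=
  zero_lt_one.trans_le (one_le_resonance n)

theorem tendsto_resonance_atTop : Tendsto resonance atTop atTop :=
  tendsto_log_atTop.comp <|
    (tendsto_natCast_atTop_atTop.atTop_add tendsto_const_nhds).const_mul_atTop (by positivity)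

theorem profile_resonance (n : ℕ) : profile (resonance n) = 2 * resonance n ^ 2 + 1 := by
  rw [profile, sin_exp_resonance]; ring

theorem hasDerivAt_profile_resonance (n : ℕ) :
    HasDerivAt profile (4 * resonance n + resonance n ^ 2 * exp (resonance n)) (resonance n) := by
  refine (hasDerivAt_profile _).congr_deriv ?_
  rw [sin_exp_resonance, cos_exp_resonance]; ring

end

theorem exp_div_le_div_rpow_three_halves {t : ℝ} (ht : 1 ≤ t) :
    exp t / (27 * t) ≤ (4 * t + t ^ 2 * exp t) / (2 * t ^ 2 + 1) ^ ((3 : ℝ) / 2) := by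
  have hden : (2 * t ^ 2 + 1) ^ ((3 : ℝ) / 2) ≤ 27 * t ^ 3 :=
    calc (2 * t ^ 2 + 1) ^ ((3 : ℝ) / 2) ≤ ((3 * t) ^ 2) ^ ((3 : ℝ) / 2) := by
          gcongr; nlinarith
      _ = 27 * t ^ 3 := by
          rw [← rpow_natCast, ← rpow_mul (by positivity)]
          norm_num; ring
  calc exp t / (27 * t) = t ^ 2 * exp t / (27 * t ^ 3) := by field_simp
    _ ≤ _ := div_le_div₀ (by positivity) (by nlinarith [exp_pos t]) (by positivity) hden

theorem tendsto_exp_div_const_mul_atTop {c : ℝ} (hc : 0 < c) :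
    Tendsto (fun t => exp t / (c * t)) atTop atTop := by
  simpa [div_div, mul_comm] using (tendsto_exp_div_pow_atTop 1).atTop_div_const hc

theorem stmt_5 :
    ∃ x : ℕ → EuclideanSpace ℝ (Fin 2),
      Tendsto (fun n => ‖x n‖) atTop atTop ∧
      Tendsto (fun n =>
        ‖gradient (fun y : EuclideanSpace ℝ (Fin 2) =>
            ‖y‖ ^ 2 * (Real.sin (Real.exp ‖y‖) + 2) + 1) (x n)‖ /
          (‖x n‖ ^ 2 * (Real.sin (Real.exp ‖x n‖) + 2) + 1) ^ ((3 : ℝ) / 2))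
        atTop atTop := by
  set x : ℕ → EuclideanSpace ℝ (Fin 2) := fun n => EuclideanSpace.single 0 (resonance n)
  have hx : ∀ n, ‖x n‖ = resonance n := fun n => by
    simp [x, abs_of_pos (resonance_pos n)]
  refine ⟨x, by simpa only [hx] using tendsto_resonance_atTop, ?_⟩
  refine tendsto_atTop_mono (fun n => ?_)
    ((tendsto_exp_div_const_mul_atTop (by norm_num : (0 : ℝ) < 27)).comp tendsto_resonance_atTop)
  have hderiv := hasDerivAt_profile_resonance n
  rw [← hx] at hderiv
  have hx0 : x n ≠ 0 := norm_pos_iff.mp (hx n ▸ resonance_pos n)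
  change _ ≤ ‖gradient (fun y => profile ‖y‖) (x n)‖ / profile ‖x n‖ ^ ((3 : ℝ) / 2)
  rw [norm_gradient_comp_norm hx0 hderiv, hx, profile_resonance,
    abs_of_pos (by have := resonance_pos n; positivity)]
  exact exp_div_le_div_rpow_three_halves (one_le_resonance n)
end

section
/- Let p > 2 and let u : [0,∞) → ℝ be a radial profile of a smooth compactly supported function on ℝ² with ‖u‖ := (‖∇u‖₂² + ‖u‖_p²)^{1/2}. Then for every k ∈ (0, 2/p) there exist C > 0 such that r^k u(r)² ≤ C ‖u‖² for all r ≥ 1; equivalently, |u(x)| ≤ C|x|^{-k/2}‖u‖ for |x| ≥ 1. -/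
open MeasureTheory Real Set

noncomputable section

lemma aux_polar2 (f : ℝ → ℝ) :
    ∫ y : EuclideanSpace ℝ (Fin 2), f ‖y‖ =
      2 * ((volume (Metric.ball (0 : EuclideanSpace ℝ (Fin 2)) 1)).toReal *
        ∫ s in Set.Ioi (0:ℝ), s * f s) := by
  rw [MeasureTheory.integral_fun_norm_addHaar volume f]
  simp only [finrank_euclideanSpace_fin, smul_eq_mul, nsmul_eq_mul, Nat.cast_ofNat]
  norm_num
  left; simp [Measure.real]

lemma aux_gradbound (u : EuclideanSpace ℝ (Fin 2) → ℝ) (hu : ContDiff ℝ (⊤ : ℕ∞) u)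
    (hrad : ∀ x y : EuclideanSpace ℝ (Fin 2), ‖x‖ = ‖y‖ → u x = u y)
    (y : EuclideanSpace ℝ (Fin 2)) :
    (deriv (fun r : ℝ => u (r • EuclideanSpace.single (0:Fin 2) (1:ℝ))) ‖y‖)^2
      ≤ ‖fderiv ℝ u y‖^2 := by
  set e : EuclideanSpace ℝ (Fin 2) := EuclideanSpace.single (0:Fin 2) (1:ℝ) with he
  have hne : ‖e‖ = 1 := by simp [he, EuclideanSpace.norm_single]
  set g : ℝ → ℝ := fun r => u (r • e) with hg
  have hgx : ∀ x : EuclideanSpace ℝ (Fin 2), u x = g ‖x‖ := by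
    intro x
    apply hrad
    rw [norm_smul, hne]
    simp [abs_of_nonneg (norm_nonneg x)]
  rcases eq_or_ne y 0 with rfl | hy
  · -- deriv g 0 = 0 since g is even
    have geven : ∀ r, g (-r) = g r := by
      intro r; apply hrad; rw [norm_smul, norm_smul]; simp
    have hd0 : deriv g 0 = 0 := by
      have h1 : (fun x : ℝ => g (-x)) = g := funext geven
      have h2 : deriv (fun x : ℝ => g (-x)) 0 = -deriv g 0 := by
        rw [deriv_comp_neg]; simp
      rw [h1] at h2; linarith
    simp [hd0]
  · have hr : 0 < ‖y‖ := norm_pos_iff.2 hy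
    set v : EuclideanSpace ℝ (Fin 2) := ‖y‖⁻¹ • y with hv
    have hnv : ‖v‖ = 1 := norm_smul_inv_norm hy
    have hyv : ‖y‖ • v = y := smul_inv_smul₀ (ne_of_gt hr) y
    have hdh : HasDerivAt (fun s : ℝ => u (s • v)) ((fderiv ℝ u y) v) ‖y‖ := by
      have h1 : HasDerivAt (fun s : ℝ => s • v) v ‖y‖ := by
        simpa using (hasDerivAt_id ‖y‖).smul_const v
      have h2 : HasFDerivAt u (fderiv ℝ u y) (‖y‖ • v) := by
        rw [hyv]; exact ((hu.differentiable (by simp)) y).hasFDerivAt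
      exact h2.comp_hasDerivAt ‖y‖ h1
    have hev : (fun s : ℝ => u (s • v)) =ᶠ[nhds ‖y‖] g := by
      filter_upwards [Ioi_mem_nhds hr] with s hs
      rw [hgx (s • v), norm_smul, hnv]
      simp [abs_of_nonneg (le_of_lt (show (0:ℝ) < s from hs))]
    have hdg : deriv g ‖y‖ = (fderiv ℝ u y) v := by
      rw [← hev.deriv_eq]; exact hdh.deriv
    rw [hdg]
    have habs : |(fderiv ℝ u y) v| ≤ ‖fderiv ℝ u y‖ := by
      have := (fderiv ℝ u y).le_opNorm v
      rw [hnv, mul_one] at this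
      simpa [Real.norm_eq_abs] using this
    calc ((fderiv ℝ u y) v)^2 = |(fderiv ℝ u y) v|^2 := (sq_abs _).symm
    _ ≤ ‖fderiv ℝ u y‖^2 := by
        apply pow_le_pow_left₀ (abs_nonneg _) habs

lemma aux_intOn {f : ℝ → ℝ} {c : ℝ} (hcont : ContinuousOn f (Ici c)) {M : ℝ}
    (hM : ∀ s, M ≤ s → f s = 0) : IntegrableOn f (Ioi c) := by
  set R := max M c with hR
  have h1 : IntegrableOn f (Ioc c R) :=
    (hcont.mono (Icc_subset_Ici_self)).integrableOn_Icc.mono_set Ioc_subset_Icc_self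
  have h2 : IntegrableOn f (Ioi R) := by
    apply (integrableOn_zero).congr_fun (fun x hx => ?_) measurableSet_Ioi
    exact (hM x ((le_max_left M c).trans (le_of_lt hx))).symm
  have := h1.union h2
  rwa [Ioc_union_Ioi_eq_Ioi (le_max_right M c)] at this

lemma aux_core (k : ℝ) (hk0 : 0 < k) (g : ℝ → ℝ) (hg : ContDiff ℝ (⊤ : ℕ∞) g)
    (hgsupp : HasCompactSupport g) (r : ℝ) (hr : 1 ≤ r) :
    r ^ k * (g r)^2 ≤ (k+1) * (∫ s in Ioi (1:ℝ), s^(2*k-1) * (g s)^2)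
      + ∫ s in Ioi (1:ℝ), s * (deriv g s)^2 := by
  have hgc : Continuous g := hg.continuous
  have hgc' : Continuous (deriv g) := hg.continuous_deriv (by simp)
  have hgd : ∀ s, HasDerivAt g (deriv g s) s := fun s => ((hg.differentiable (by simp)) s).hasDerivAt
  -- support bound
  obtain ⟨M, hM⟩ := hgsupp.isBounded.subset_closedBall 0
  have hgM : ∀ s, M < |s| → g s = 0 := by
    intro s hs
    apply image_eq_zero_of_notMem_tsupport
    intro hmem
    have := hM hmem
    simp only [Metric.mem_closedBall, dist_zero_right, Real.norm_eq_abs] at this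
    linarith
  -- integrability on Ioi 1
  have hrpow_cont : ∀ a : ℝ, ContinuousOn (fun s : ℝ => s ^ a) (Ici 1) := by
    intro a s hs
    exact (Real.continuousAt_rpow_const s a (Or.inl (by simp at hs; positivity))).continuousWithinAt
  have hvan : ∀ (h : ℝ → ℝ), (∀ s, g s = 0 → h s = 0) → ∀ s, M + 1 ≤ s → h s = 0 := by
    intro h hh s hs
    exact hh s (hgM s (lt_of_lt_of_le (by linarith) (le_abs_self s)))
  have I₁ : IntegrableOn (fun s => s^(2*k-1) * (g s)^2) (Ioi (1:ℝ)) := by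
    apply aux_intOn ((hrpow_cont (2*k-1)).mul ((hgc.pow 2).continuousOn)) (M := M + 1)
    exact hvan _ (fun s h => by simp [h])
  have I₂ : Integrable (fun s => s * (deriv g s)^2) := by
    apply Continuous.integrable_of_hasCompactSupport (continuous_id.mul (hgc'.pow 2))
    have h := hgsupp.deriv.comp_left (g := fun t : ℝ => t^2) (by simp); exact h.mul_left
  -- choose R beyond support
  set R := max r (M + 1) with hR
  have hrR : r ≤ R := le_max_left _ _
  have hgR : g R = 0 := hgM R (lt_of_lt_of_le (by have := le_max_right r (M+1); linarith) (le_abs_self R))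
  -- derivative of φ
  set D : ℝ → ℝ := fun s => k * s^(k-1) * (g s)^2 + s^k * (2 * g s * deriv g s) with hD
  have hφ : ∀ s ∈ uIcc r R, HasDerivAt (fun s => s^k * (g s)^2) (D s) s := by
    intro s hs
    rw [uIcc_of_le hrR] at hs
    have hs0 : s ≠ 0 := by have := hs.1; intro h; rw [h] at this; linarith
    have h1 : HasDerivAt (fun s : ℝ => s^k) (k * s^(k-1)) s := by
      simpa [mul_comm] using Real.hasDerivAt_rpow_const (p := k) (Or.inl hs0)
    have h2 : HasDerivAt (fun s => (g s)^2) (2 * g s * deriv g s) s := by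
      have h := (hgd s).pow 2; simp at h; exact h
    have h := h1.mul h2; simp [hD, mul_comm, mul_assoc, mul_left_comm] at h ⊢; exact h
  have hDcont : ContinuousOn D (uIcc r R) := by
    rw [uIcc_of_le hrR]
    have hsub : Icc r R ⊆ Ici 1 := fun s hs => le_trans hr hs.1
    apply ContinuousOn.add
    · exact ((continuousOn_const.mul ((hrpow_cont (k-1)).mono hsub)).mul ((hgc.pow 2).continuousOn))
    · exact ((hrpow_cont k).mono hsub).mul ((continuousOn_const.mul hgc.continuousOn).mul hgc'.continuousOn)
  have hDint : IntervalIntegrable D volume r R := hDcont.intervalIntegrable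
  have hFTC : ∫ s in r..R, D s = R^k * (g R)^2 - r^k * (g r)^2 :=
    intervalIntegral.integral_eq_sub_of_hasDerivAt hφ hDint
  rw [hgR] at hFTC
  have hval : r^k * (g r)^2 = ∫ s in r..R, (-D s) := by
    rw [intervalIntegral.integral_neg, hFTC]; ring
  -- pointwise bound
  set ψ : ℝ → ℝ := fun s => (k+1) * s^(2*k-1) * (g s)^2 + s * (deriv g s)^2 with hψ
  have hpt : ∀ s ∈ Icc r R, -D s ≤ ψ s := by
    intro s hs
    have hs1 : (1:ℝ) ≤ s := le_trans hr hs.1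
    have hs0 : (0:ℝ) < s := lt_of_lt_of_le one_pos hs1
    have e1 : s^(k-1/2) * s^(1/2:ℝ) = s^k := by
      rw [← Real.rpow_add hs0]; norm_num
    have e2 : (s^(k-1/2)) * (s^(k-1/2)) = s^(2*k-1) := by
      rw [← Real.rpow_add hs0]; ring_nf
    have e3 : (s^(1/2:ℝ)) * (s^(1/2:ℝ)) = s := by
      rw [← Real.rpow_add hs0]; norm_num
    have h2 : -(s^k * (2 * g s * deriv g s)) ≤ s^(2*k-1) * (g s)^2 + s * (deriv g s)^2 := by
      have key : 2 * (s^(k-1/2) * |g s|) * (s^(1/2:ℝ) * |deriv g s|) ≤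
          (s^(k-1/2) * |g s|)^2 + (s^(1/2:ℝ) * |deriv g s|)^2 := two_mul_le_add_sq _ _
      have ha : (s^(k-1/2) * |g s|)^2 = s^(2*k-1) * (g s)^2 := by
        rw [mul_pow, sq_abs, sq, e2]
      have hb : (s^(1/2:ℝ) * |deriv g s|)^2 = s * (deriv g s)^2 := by
        rw [mul_pow, sq_abs, sq, e3]
      have hc : 2 * (s^(k-1/2) * |g s|) * (s^(1/2:ℝ) * |deriv g s|)
          = 2 * s^k * (|g s| * |deriv g s|) := by
        rw [← e1]; ring
      rw [ha, hb, hc] at key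
      refine le_trans ?_ key
      have habs : -(g s * deriv g s) ≤ |g s| * |deriv g s| := by
        rw [← abs_mul]; exact neg_le_abs _
      have hsk : (0:ℝ) ≤ s^k := Real.rpow_nonneg (le_of_lt hs0) k
      nlinarith [mul_le_mul_of_nonneg_left habs hsk]
    have h1 : -(k * s^(k-1) * (g s)^2) ≤ k * s^(2*k-1) * (g s)^2 := by
      have : (0:ℝ) ≤ k * s^(k-1) * (g s)^2 := by positivity
      have : (0:ℝ) ≤ k * s^(2*k-1) * (g s)^2 := by positivity
      linarith [mul_nonneg (mul_nonneg (le_of_lt hk0) (Real.rpow_nonneg (le_of_lt hs0) (k-1))) (sq_nonneg (g s))]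
    simp only [hD, hψ, neg_add]
    nlinarith [h1, h2]
  -- interval integral bound
  have hψcont : ContinuousOn ψ (uIcc r R) := by
    rw [uIcc_of_le hrR]
    have hsub : Icc r R ⊆ Ici 1 := fun s hs => le_trans hr hs.1
    exact ((continuousOn_const.mul ((hrpow_cont (2*k-1)).mono hsub)).mul ((hgc.pow 2).continuousOn)).add
      (continuousOn_id.mul ((hgc'.pow 2).continuousOn))
  have hmono : ∫ s in r..R, (-D s) ≤ ∫ s in r..R, ψ s := by
    apply intervalIntegral.integral_mono_on hrR _ hψcont.intervalIntegrable hpt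
    exact hDint.neg
  -- extend to Ioi 1
  have hIψ : IntegrableOn ψ (Ioi (1:ℝ)) := by
    have h0 : IntegrableOn (fun s => (k+1) * (s^(2*k-1) * (g s)^2)) (Ioi (1:ℝ)) := I₁.const_mul (k+1)
    have h1 : IntegrableOn (fun s => (k+1) * s^(2*k-1) * (g s)^2) (Ioi (1:ℝ)) :=
      h0.congr_fun (fun s _ => by ring) measurableSet_Ioi
    exact h1.add I₂.integrableOn
  have hext : ∫ s in r..R, ψ s ≤ ∫ s in Ioi (1:ℝ), ψ s := by
    rw [intervalIntegral.integral_of_le hrR]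
    apply setIntegral_mono_set hIψ
    · refine (ae_restrict_iff' measurableSet_Ioi).2 (ae_of_all _ fun s hs => ?_)
      have hs1 : (1:ℝ) < s := hs
      have hs0 : (0:ℝ) ≤ s := by linarith
      simp only [hψ, Pi.zero_apply]
      positivity
    · apply HasSubset.Subset.eventuallyLE
      intro s hs
      exact lt_of_le_of_lt hr hs.1
  have hsplit : ∫ s in Ioi (1:ℝ), ψ s = (k+1) * (∫ s in Ioi (1:ℝ), s^(2*k-1) * (g s)^2)
      + ∫ s in Ioi (1:ℝ), s * (deriv g s)^2 := by
    have h1 : IntegrableOn (fun s => (k+1) * (s^(2*k-1) * (g s)^2)) (Ioi (1:ℝ)) := I₁.const_mul (k+1)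
    rw [show ψ = fun s => (k+1) * (s^(2*k-1) * (g s)^2) + s * (deriv g s)^2 by funext s; simp [hψ]; ring]
    rw [integral_add h1 I₂.integrableOn, integral_const_mul]
  calc r^k * (g r)^2 = ∫ s in r..R, (-D s) := hval
    _ ≤ ∫ s in r..R, ψ s := hmono
    _ ≤ ∫ s in Ioi (1:ℝ), ψ s := hext
    _ = _ := hsplit

lemma aux_memLp {α : Type*} [MeasurableSpace α] {μ : Measure α} {q : ℝ} (hq : 0 < q)
    {f : α → ℝ} (hmeas : AEStronglyMeasurable f μ) (hnn : 0 ≤ᵐ[μ] f)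
    (hint : Integrable (fun x => f x ^ q) μ) : MemLp f (ENNReal.ofReal q) μ := by
  have hq0 : ENNReal.ofReal q ≠ 0 := by simp [ENNReal.ofReal_eq_zero]; linarith
  refine (memLp_norm_rpow_iff hmeas hq0 (by simp)).1 ?_
  rw [ENNReal.div_self hq0 (by simp), memLp_one_iff_integrable]
  apply hint.congr
  filter_upwards [hnn] with x hx
  rw [Real.norm_of_nonneg hx, ENNReal.toReal_ofReal hq.le]

lemma aux_holder (p k : ℝ) (hp : 2 < p) (hk : k < 2/p) (g : ℝ → ℝ)
    (hgc : Continuous g) (hgsupp : HasCompactSupport g) :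
    ∫ s in Ioi (1:ℝ), s^(2*k-1) * (g s)^2 ≤
      (∫ s in Ioi (1:ℝ), s^((2*k-1-2/p)*(p/(p-2))))^((p-2)/p) *
        (∫ s in Ioi (1:ℝ), s * |g s|^p)^(2/p) := by
  have hp0 : (0:ℝ) < p := by linarith
  have hp2 : (0:ℝ) < p - 2 := by linarith
  set β := 2*k-1-2/p with hβdef
  set q₁ := p/(p-2) with hq₁
  set q₂ := p/2 with hq₂
  have hq₁pos : 0 < q₁ := by positivity
  have hq₂pos : 0 < q₂ := by positivity
  have hconj : Real.HolderConjugate q₁ q₂ := by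
    rw [Real.holderConjugate_iff]; constructor
    · rw [hq₁]; rw [lt_div_iff₀ hp2]; linarith
    · rw [hq₁, hq₂]; field_simp; ring
  have hβq : β * q₁ < -1 := by
    have hkp : k * p < 2 := (lt_div_iff₀ hp0).1 hk
    rw [hβdef, hq₁, mul_div_assoc']
    rw [div_lt_iff₀ hp2]
    have h2p : 2/p * p = 2 := by field_simp
    nlinarith
  -- the two MemLp facts
  have meas₁ : AEStronglyMeasurable (fun s : ℝ => s ^ β) (volume.restrict (Ioi (1:ℝ))) :=
    (measurable_id.pow_const β).aestronglyMeasurable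
  have hL₁ : MemLp (fun s : ℝ => s ^ β) (ENNReal.ofReal q₁) (volume.restrict (Ioi (1:ℝ))) := by
    apply aux_memLp hq₁pos meas₁
    · refine (ae_restrict_iff' measurableSet_Ioi).2 (ae_of_all _ fun s hs => ?_)
      exact Real.rpow_nonneg (by simp at hs; linarith) β
    · have base : IntegrableOn (fun s : ℝ => s ^ (β * q₁)) (Ioi (1:ℝ)) :=
        integrableOn_Ioi_rpow_of_lt hβq one_pos
      apply base.congr_fun (fun s hs => ?_) measurableSet_Ioi
      rw [Real.rpow_mul (by simp at hs; linarith)]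
  have measg : AEStronglyMeasurable (fun s : ℝ => s ^ (2/p) * (g s)^2)
      (volume.restrict (Ioi (1:ℝ))) :=
    ((measurable_id.pow_const (2/p)).mul (hgc.measurable.pow_const 2)).aestronglyMeasurable
  have keyEq : ∀ s : ℝ, s ∈ Ioi (1:ℝ) →
      s * |g s|^p = (s ^ (2/p) * (g s)^2) ^ q₂ := by
    intro s hs
    have hs0 : (0:ℝ) < s := lt_trans one_pos hs
    rw [Real.mul_rpow (Real.rpow_nonneg hs0.le _) (sq_nonneg _)]
    have e1 : (s ^ (2/p)) ^ q₂ = s := by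
      rw [← Real.rpow_mul hs0.le, hq₂]
      rw [show 2/p * (p/2) = 1 by field_simp]
      exact Real.rpow_one s
    have e2 : ((g s)^2) ^ q₂ = |g s| ^ p := by
      rw [← sq_abs, ← Real.rpow_natCast |g s| 2, ← Real.rpow_mul (abs_nonneg _), hq₂]
      norm_num
      congr 1
      ring
    rw [e1, e2]
  have hIntP : Integrable (fun s => s * |g s| ^ p) := by
    apply Continuous.integrable_of_hasCompactSupport
    · exact continuous_id.mul (hgc.abs.rpow_const (fun s => Or.inr hp0.le))
    · exact (hgsupp.comp_left (g := fun t : ℝ => |t|^p) (by simp [Real.zero_rpow hp0.ne'])).mul_left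
  have hL₂ : MemLp (fun s : ℝ => s ^ (2/p) * (g s)^2) (ENNReal.ofReal q₂)
      (volume.restrict (Ioi (1:ℝ))) := by
    apply aux_memLp hq₂pos measg
    · refine (ae_restrict_iff' measurableSet_Ioi).2 (ae_of_all _ fun s hs => ?_)
      have hs0 : (0:ℝ) < s := lt_trans one_pos hs
      positivity
    · exact hIntP.integrableOn.congr_fun keyEq measurableSet_Ioi
  have H := integral_mul_le_Lp_mul_Lq_of_nonneg hconj
    ((ae_restrict_iff' measurableSet_Ioi).2 (ae_of_all _ fun s hs =>
      Real.rpow_nonneg (by simp at hs; linarith) β))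
    ((ae_restrict_iff' measurableSet_Ioi).2 (ae_of_all _ fun s hs => by
      have hs0 : (0:ℝ) < s := lt_trans one_pos hs
      positivity))
    hL₁ hL₂
  -- rewrite the three integrals in H
  have eL : ∫ s in Ioi (1:ℝ), (s ^ β) * (s ^ (2/p) * (g s)^2) =
      ∫ s in Ioi (1:ℝ), s^(2*k-1) * (g s)^2 := by
    apply setIntegral_congr_fun measurableSet_Ioi
    intro s hs
    have hs0 : (0:ℝ) < s := lt_trans one_pos hs
    show s ^ β * (s ^ (2/p) * (g s)^2) = s^(2*k-1) * (g s)^2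
    rw [← mul_assoc, ← Real.rpow_add hs0]
    congr 2
    rw [hβdef]; ring
  have eR1 : ∫ s in Ioi (1:ℝ), (s ^ β) ^ q₁ = ∫ s in Ioi (1:ℝ), s ^ (β * q₁) := by
    apply setIntegral_congr_fun measurableSet_Ioi
    intro s hs
    show (s ^ β) ^ q₁ = s ^ (β * q₁)
    rw [Real.rpow_mul (by simp at hs; linarith)]
  have eR2 : ∫ s in Ioi (1:ℝ), (s ^ (2/p) * (g s)^2) ^ q₂ = ∫ s in Ioi (1:ℝ), s * |g s|^p := by
    apply setIntegral_congr_fun measurableSet_Ioi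
    intro s hs
    exact (keyEq s hs).symm
  rw [eL, eR1, eR2] at H
  have e1q : 1/q₁ = (p-2)/p := by rw [hq₁, one_div_div]
  have e2q : 1/q₂ = 2/p := by rw [hq₂, one_div_div]
  rw [e1q, e2q] at H
  exact H


set_option maxHeartbeats 5000000 in
theorem stmt_16 (p : ℝ) (hp : 2 < p) (k : ℝ) (hk0 : 0 < k) (hk : k < 2 / p) :
    ∃ C > (0 : ℝ), ∀ u : EuclideanSpace ℝ (Fin 2) → ℝ,
      ContDiff ℝ (⊤ : ℕ∞) u → HasCompactSupport u →
      (∀ x y : EuclideanSpace ℝ (Fin 2), ‖x‖ = ‖y‖ → u x = u y) →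
      ∀ x : EuclideanSpace ℝ (Fin 2), 1 ≤ ‖x‖ →
        ‖x‖ ^ k * (u x) ^ 2 ≤
          C * ((∫ y, ‖gradient u y‖ ^ 2) + ((∫ y, |u y| ^ p) ^ ((1 : ℝ) / p)) ^ 2) := by
  have hp0 : (0:ℝ) < p := by linarith
  set B := (volume (Metric.ball (0 : EuclideanSpace ℝ (Fin 2)) 1)).toReal with hBdef
  have hB : 0 < B := by
    rw [hBdef]
    apply ENNReal.toReal_pos
    · exact (Metric.measure_ball_pos volume (0 : EuclideanSpace ℝ (Fin 2)) one_pos).ne'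
    · exact measure_ball_lt_top.ne
  set A := (∫ s in Ioi (1:ℝ), s^((2*k-1-2/p)*(p/(p-2)))) with hAdef
  have hA : 0 ≤ A := setIntegral_nonneg measurableSet_Ioi fun s hs =>
    Real.rpow_nonneg (by simp at hs; linarith) _
  set c₁ := (k+1) * (A^((p-2)/p) * (1/(2*B))^(2/p)) with hc₁def
  set c₂ := 1/(2*B) with hc₂def
  have hc₂pos : 0 < c₂ := by rw [hc₂def]; positivity
  have hc₁nn : 0 ≤ c₁ := by rw [hc₁def]; positivity
  refine ⟨c₁ + c₂ + 1, by linarith, ?_⟩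
  intro u hu hsupp hrad x hx
  set e : EuclideanSpace ℝ (Fin 2) := EuclideanSpace.single (0:Fin 2) (1:ℝ) with hedef
  have hne : ‖e‖ = 1 := by simp [hedef, EuclideanSpace.norm_single]
  set g : ℝ → ℝ := fun r => u (r • e) with hgdef
  have hgx : ∀ z : EuclideanSpace ℝ (Fin 2), u z = g ‖z‖ := by
    intro z
    apply hrad
    rw [norm_smul, hne]
    simp [abs_of_nonneg (norm_nonneg z)]
  have hsm : ContDiff ℝ (⊤ : ℕ∞) g := hu.comp (contDiff_id.smul contDiff_const)
  have hgc : Continuous g := hsm.continuous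
  have hgc' : Continuous (deriv g) := hsm.continuous_deriv (by simp)
  have hgsupp : HasCompactSupport g := by
    have hiso : Isometry (fun r : ℝ => r • e) := by
      apply Isometry.of_dist_eq
      intro a b
      simp [dist_eq_norm, ← sub_smul, norm_smul, hne]
    exact hsupp.comp_isClosedEmbedding hiso.isClosedEmbedding
  -- support bound for g and deriv g
  obtain ⟨M, hM⟩ := hgsupp.isBounded.subset_closedBall 0
  have hgM : ∀ s, M < |s| → g s = 0 := by
    intro s hs
    apply image_eq_zero_of_notMem_tsupport
    intro hmem
    have := hM hmem
    simp only [Metric.mem_closedBall, dist_zero_right, Real.norm_eq_abs] at this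
    linarith
  have hgM' : ∀ s, M < |s| → deriv g s = 0 := by
    intro s hs
    by_contra hne0
    have hmem : s ∈ Function.support (deriv g) := hne0
    have := hM (support_deriv_subset hmem)
    simp only [Metric.mem_closedBall, dist_zero_right, Real.norm_eq_abs] at this
    linarith
  -- global integrable functions
  have hIntP : Integrable (fun s => s * |g s| ^ p) := by
    apply Continuous.integrable_of_hasCompactSupport
    · exact continuous_id.mul (hgc.abs.rpow_const (fun s => Or.inr hp0.le))
    · exact (hgsupp.comp_left (g := fun t : ℝ => |t|^p) (by simp [Real.zero_rpow hp0.ne'])).mul_left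
  have hIntG : Integrable (fun s => s * (deriv g s)^2) := by
    apply Continuous.integrable_of_hasCompactSupport (continuous_id.mul (hgc'.pow 2))
    have h := hgsupp.deriv.comp_left (g := fun t : ℝ => t^2) (by simp); exact h.mul_left
  -- polar coordinate identities
  have hP : ∫ y, |u y| ^ p = 2 * (B * ∫ s in Ioi (0:ℝ), s * |g s|^p) := by
    simp only [hgx]
    exact aux_polar2 (fun r => |g r|^p)
  have hGpolar : 2 * (B * ∫ s in Ioi (0:ℝ), s * (deriv g s)^2) ≤ ∫ y, ‖gradient u y‖^2 := by
    rw [← aux_polar2 (fun r => (deriv g r)^2)]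
    have int1 : Integrable (fun y : EuclideanSpace ℝ (Fin 2) => (deriv g ‖y‖)^2) := by
      apply Continuous.integrable_of_hasCompactSupport ((hgc'.comp continuous_norm).pow 2)
      apply HasCompactSupport.intro (isCompact_closedBall (0 : EuclideanSpace ℝ (Fin 2)) M)
      intro y hy
      simp only [Metric.mem_closedBall, dist_zero_right, not_le] at hy
      show (deriv g ‖y‖)^2 = 0
      rw [hgM' ‖y‖ (by rw [abs_of_nonneg (norm_nonneg y)]; exact hy)]
      norm_num
    have int2 : Integrable (fun y : EuclideanSpace ℝ (Fin 2) => ‖gradient u y‖^2) := by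
      have heq : (fun y : EuclideanSpace ℝ (Fin 2) => ‖gradient u y‖^2)
          = fun y => ‖fderiv ℝ u y‖^2 := by
        funext y
        rw [gradient, (InnerProductSpace.toDual ℝ _).symm.norm_map]
      rw [heq]
      apply Continuous.integrable_of_hasCompactSupport ((hu.continuous_fderiv (by simp)).norm.pow 2)
      exact (hsupp.fderiv ℝ).comp_left (g := fun L : EuclideanSpace ℝ (Fin 2) →L[ℝ] ℝ => ‖L‖^2)
        (by simp)
    apply integral_mono int1 int2
    intro y
    have hb := aux_gradbound u hu hrad y
    have hg2 : ‖gradient u y‖ = ‖fderiv ℝ u y‖ := by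
      rw [gradient, (InnerProductSpace.toDual ℝ _).symm.norm_map]
    show (deriv g ‖y‖)^2 ≤ ‖gradient u y‖^2
    rw [hg2]
    exact hb
  -- nonnegativity of both sides' pieces
  set P₀ := ∫ y, |u y| ^ p with hP₀def
  set G₀ := ∫ y, ‖gradient u y‖ ^ 2 with hG₀def
  have hP₀nn : 0 ≤ P₀ := by
    rw [hP₀def]
    apply integral_nonneg
    intro y
    exact Real.rpow_nonneg (abs_nonneg _) p
  have hG₀nn : 0 ≤ G₀ := by
    rw [hG₀def]
    apply integral_nonneg
    intro y
    positivity
  -- 1D chain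
  have hcore := aux_core k hk0 g hsm hgsupp ‖x‖ hx
  have hhold := aux_holder p k hp hk g hgc hgsupp
  -- compare Ioi 1 with Ioi 0 integrals
  have hsub01 : (Ioi (1:ℝ)) ≤ᵐ[volume] (Ioi (0:ℝ)) :=
    HasSubset.Subset.eventuallyLE (fun s hs => mem_Ioi.2 (lt_trans one_pos (mem_Ioi.1 hs)))
  have hmono1 : ∫ s in Ioi (1:ℝ), s * |g s|^p ≤ ∫ s in Ioi (0:ℝ), s * |g s|^p := by
    apply setIntegral_mono_set hIntP.integrableOn _ hsub01
    refine (ae_restrict_iff' measurableSet_Ioi).2 (ae_of_all _ fun s hs => ?_)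
    have hs0 : (0:ℝ) < s := hs
    positivity
  have hmono2 : ∫ s in Ioi (1:ℝ), s * (deriv g s)^2 ≤ ∫ s in Ioi (0:ℝ), s * (deriv g s)^2 := by
    apply setIntegral_mono_set hIntG.integrableOn _ hsub01
    refine (ae_restrict_iff' measurableSet_Ioi).2 (ae_of_all _ fun s hs => ?_)
    have hs0 : (0:ℝ) < s := hs
    positivity
  have hPval : ∫ s in Ioi (0:ℝ), s * |g s|^p = P₀ / (2*B) := by
    rw [hP]
    field_simp
  have hGval : ∫ s in Ioi (0:ℝ), s * (deriv g s)^2 ≤ G₀ / (2*B) := by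
    rw [le_div_iff₀ (by linarith : (0:ℝ) < 2*B)]
    linarith [hGpolar]
  have hIa_nn : 0 ≤ ∫ s in Ioi (1:ℝ), s * |g s|^p := by
    apply setIntegral_nonneg measurableSet_Ioi
    intro s hs
    have hs0 : (0:ℝ) < s := lt_trans one_pos hs
    positivity
  have hstep1 : (∫ s in Ioi (1:ℝ), s * |g s|^p)^(2/p) ≤ P₀^(2/p) * (1/(2*B))^(2/p) := by
    have h1 : (∫ s in Ioi (1:ℝ), s * |g s|^p)^(2/p) ≤ (P₀/(2*B))^(2/p) := by
      apply Real.rpow_le_rpow hIa_nn _ (by positivity)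
      rw [← hPval]
      exact hmono1
    have h2 : (P₀/(2*B))^(2/p) = P₀^(2/p) * (1/(2*B))^(2/p) := by
      rw [div_eq_mul_one_div P₀ (2*B)]
      exact Real.mul_rpow hP₀nn (by positivity)
    rw [h2] at h1
    exact h1
  have hsq : ((P₀) ^ ((1:ℝ)/p)) ^ (2:ℕ) = P₀ ^ (2/p) := by
    rw [← Real.rpow_natCast (P₀^((1:ℝ)/p)) 2, ← Real.rpow_mul hP₀nn]
    congr 1
    push_cast
    ring
  have hAe : (0:ℝ) ≤ A^((p-2)/p) := by positivity
  have hPp : (0:ℝ) ≤ P₀^(2/p) := by positivity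
  have hfin : ‖x‖ ^ k * (u x) ^ 2 ≤ c₁ * P₀^(2/p) + c₂ * G₀ := by
    rw [hgx x]
    have s1 : (k+1) * (∫ s in Ioi (1:ℝ), s^(2*k-1) * (g s)^2) ≤ c₁ * P₀^(2/p) := by
      have h2 : (∫ s in Ioi (1:ℝ), s^(2*k-1)*(g s)^2)
          ≤ A^((p-2)/p) * (P₀^(2/p) * (1/(2*B))^(2/p)) :=
        hhold.trans (mul_le_mul_of_nonneg_left hstep1 hAe)
      calc (k+1) * (∫ s in Ioi (1:ℝ), s^(2*k-1) * (g s)^2)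
          ≤ (k+1) * (A^((p-2)/p) * (P₀^(2/p) * (1/(2*B))^(2/p))) :=
            mul_le_mul_of_nonneg_left h2 (by linarith)
        _ = c₁ * P₀^(2/p) := by rw [hc₁def]; ring
    have s2 : (∫ s in Ioi (1:ℝ), s * (deriv g s)^2) ≤ c₂ * G₀ := by
      refine hmono2.trans (hGval.trans (le_of_eq ?_))
      rw [hc₂def]
      field_simp
    linarith [hcore, s1, s2]
  rw [hsq]
  nlinarith [hfin, hPp, hG₀nn, hc₁nn, hc₂pos.le]
end
end

section
/- Let 1 < p < 2. There exist C > 0 and R > 0 such that for all radial u in the completion H^{2,p}_r of radial C_c^∞(ℝ²) functions under ‖u‖² = ‖∇u‖₂² + ‖u‖_p², one has |u(x)| ≤ C ‖u‖ |x|^{-(6-p)/8} for |x| ≥ R. -/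
open MeasureTheory Real Set


lemma rpow_sq_aux (s : ℝ) (hs : 0 ≤ s) (e : ℝ) : (s ^ e) ^ 2 = s ^ (2 * e) := by
  rw [← Real.rpow_natCast (s ^ e) 2, ← Real.rpow_mul hs]
  norm_num [mul_comm]

lemma aux_young (αv s c d : ℝ) (hs : 1 ≤ s) :
    |s ^ αv * (2 * c * d)| ≤ s * d ^ 2 + s ^ (2 * αv - 1) * c ^ 2 := by
  have hs0 : (0:ℝ) < s := lt_of_lt_of_le one_pos hs
  have h2 := two_mul_le_add_sq (s ^ (1/2:ℝ) * |d|) (s ^ (αv - 1/2) * |c|)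
  calc |s ^ αv * (2 * c * d)|
      = 2 * (s ^ (1/2:ℝ) * |d|) * (s ^ (αv - 1/2) * |c|) := by
        rw [abs_mul, abs_of_pos (Real.rpow_pos_of_pos hs0 _), abs_mul, abs_mul, abs_two]
        have h3 : s ^ (1/2:ℝ) * s ^ (αv - 1/2) = s ^ αv := by
          rw [← Real.rpow_add hs0, show (1/2 + (αv - 1/2):ℝ) = αv by ring]
        rw [← h3]; ring
    _ ≤ (s ^ (1/2:ℝ) * |d|) ^ 2 + (s ^ (αv - 1/2) * |c|) ^ 2 := h2
    _ = s * d ^ 2 + s ^ (2 * αv - 1) * c ^ 2 := by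
        rw [mul_pow, mul_pow, sq_abs, sq_abs, rpow_sq_aux s hs0.le, rpow_sq_aux s hs0.le,
          show (2 * (1/2:ℝ)) = 1 by norm_num, show (2 * (αv - 1/2) : ℝ) = 2 * αv - 1 by ring,
          Real.rpow_one]

lemma aux_pointwise (p β γ M s c : ℝ) (hp1 : 1 < p) (hp2 : p < 2) (hs : 1 ≤ s)
    (hγ : γ - β * (2 - p) ≤ 1) (hM : 0 ≤ M) (hc : s ^ β * |c| ≤ M) :
    s ^ γ * c ^ 2 ≤ M ^ (2 - p) * (s * |c| ^ p) := by
  have hs0 : (0:ℝ) < s := lt_of_lt_of_le one_pos hs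
  have hp0 : (0:ℝ) < p := by linarith
  rcases eq_or_ne c 0 with h | h
  · simp [h, Real.zero_rpow hp0.ne']
  · have hcpos : 0 < |c| := abs_pos.2 h
    have key : s ^ (-β) * s ^ β = 1 := by
      rw [← Real.rpow_add hs0]; simp
    have hfle : |c| ≤ s ^ (-β) * M := by
      calc |c| = s ^ (-β) * (s ^ β * |c|) := by rw [← mul_assoc, key, one_mul]
        _ ≤ s ^ (-β) * M := by
            exact mul_le_mul_of_nonneg_left hc (le_of_lt (Real.rpow_pos_of_pos hs0 _))
    have hsplit : c ^ 2 = |c| ^ (2 - p : ℝ) * |c| ^ p := by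
      rw [← Real.rpow_add hcpos, show (2 - p + p : ℝ) = ((2:ℕ):ℝ) by push_cast; ring,
        Real.rpow_natCast, sq_abs]
    have h1 : |c| ^ (2 - p : ℝ) ≤ (s ^ (-β) * M) ^ (2 - p : ℝ) :=
      Real.rpow_le_rpow (abs_nonneg c) hfle (by linarith)
    have h2 : (s ^ (-β) * M) ^ (2 - p : ℝ) = s ^ (-β * (2 - p)) * M ^ (2 - p : ℝ) := by
      rw [Real.mul_rpow (le_of_lt (Real.rpow_pos_of_pos hs0 _)) hM, ← Real.rpow_mul hs0.le]
    calc s ^ γ * c ^ 2 = s ^ γ * (|c| ^ (2 - p : ℝ) * |c| ^ p) := by rw [← hsplit]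
      _ ≤ s ^ γ * ((s ^ (-β * (2 - p)) * M ^ (2 - p:ℝ)) * |c| ^ p) := by
          refine mul_le_mul_of_nonneg_left ?_ (le_of_lt (Real.rpow_pos_of_pos hs0 γ))
          refine mul_le_mul_of_nonneg_right ?_ (le_of_lt (Real.rpow_pos_of_pos hcpos p))
          rw [← h2]; exact h1
      _ = M ^ (2 - p:ℝ) * ((s ^ γ * s ^ (-β * (2 - p))) * |c| ^ p) := by ring
      _ = M ^ (2 - p:ℝ) * (s ^ (γ + -β * (2 - p)) * |c| ^ p) := by rw [← Real.rpow_add hs0]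
      _ ≤ M ^ (2 - p:ℝ) * (s ^ (1:ℝ) * |c| ^ p) := by
          refine mul_le_mul_of_nonneg_left ?_ (Real.rpow_nonneg hM _)
          refine mul_le_mul_of_nonneg_right ?_ (le_of_lt (Real.rpow_pos_of_pos hcpos p))
          exact Real.rpow_le_rpow_of_exponent_le hs (by linarith)
      _ = M ^ (2 - p:ℝ) * (s * |c| ^ p) := by rw [Real.rpow_one]

lemma aux_solve (p M K G2 : ℝ) (hp1 : 1 < p) (hp2 : p < 2) (hM : 0 ≤ M) (hK : 0 ≤ K)
    (hG : 0 ≤ G2) (h : M ^ 2 ≤ K * M ^ (2 - p : ℝ) + G2) :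
    M ≤ (2 * K) ^ (1 / p : ℝ) + Real.sqrt (2 * G2) := by
  have hp0 : (0:ℝ) < p := by linarith
  rcases eq_or_lt_of_le hM with h0 | hMpos
  · rw [← h0]
    have h1 : (0:ℝ) ≤ (2 * K) ^ (1/p:ℝ) := Real.rpow_nonneg (by linarith) _
    have h2 : (0:ℝ) ≤ Real.sqrt (2 * G2) := Real.sqrt_nonneg _
    linarith
  rcases le_total (K * M ^ (2 - p:ℝ)) G2 with hcase | hcase
  · have hsq : M ^ 2 ≤ 2 * G2 := by linarith
    have hMle : M ≤ Real.sqrt (2 * G2) := by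
      calc M = Real.sqrt (M ^ 2) := (Real.sqrt_sq hM).symm
        _ ≤ Real.sqrt (2 * G2) := Real.sqrt_le_sqrt hsq
    have h1 : (0:ℝ) ≤ (2 * K) ^ (1/p:ℝ) := Real.rpow_nonneg (by linarith) _
    linarith
  · have h2 : M ^ 2 ≤ 2 * K * M ^ (2 - p:ℝ) := by linarith
    have hpow : M ^ (p:ℝ) * M ^ (2 - p:ℝ) = M ^ 2 := by
      rw [← Real.rpow_add hMpos, show (p + (2 - p):ℝ) = ((2:ℕ):ℝ) by push_cast; ring,
        Real.rpow_natCast]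
    have hMq : 0 < M ^ (2 - p:ℝ) := Real.rpow_pos_of_pos hMpos _
    have hMp : M ^ (p:ℝ) ≤ 2 * K := by
      have h3 : M ^ (p:ℝ) * M ^ (2 - p:ℝ) ≤ 2 * K * M ^ (2 - p:ℝ) := by rw [hpow]; exact h2
      exact le_of_mul_le_mul_right h3 hMq
    have hMeq : (M ^ (p:ℝ)) ^ (1/p:ℝ) = M := by
      rw [← Real.rpow_mul hM, mul_one_div, div_self hp0.ne', Real.rpow_one]
    have hfin : M ≤ (2 * K) ^ (1/p:ℝ) := by
      rw [← hMeq]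
      exact Real.rpow_le_rpow (Real.rpow_nonneg hM _) hMp (by positivity)
    have h4 : (0:ℝ) ≤ Real.sqrt (2 * G2) := Real.sqrt_nonneg _
    linarith

lemma key1d (p : ℝ) (hp1 : 1 < p) (hp2 : p < 2) (f : ℝ → ℝ) (hf : ContDiff ℝ (⊤ : ℕ∞) f)
    (T r : ℝ) (hr : 1 ≤ r) (hrT : r ≤ T) (hfT : ∀ s, T ≤ s → f s = 0) :
    r ^ ((6 - p) / 8 : ℝ) * |f r| ≤
      (2 * (((6 - p) / 4 : ℝ) + 1) * ∫ s in (1:ℝ)..T, s * |f s| ^ p) ^ (1 / p : ℝ)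
        + Real.sqrt (2 * ∫ s in (1:ℝ)..T, s * (deriv f s) ^ 2) := by
  have hp0 : (0:ℝ) < p := by linarith
  set α : ℝ := (6 - p) / 4 with hα
  set β : ℝ := (6 - p) / 8 with hβ
  have hαpos : 0 < α := div_pos (by linarith) (by norm_num)
  have hβpos : 0 < β := div_pos (by linarith) (by norm_num)
  have h1T : (1:ℝ) ≤ T := le_trans hr hrT
  have hfc : Continuous f := hf.continuous
  have hfd : Continuous (deriv f) := hf.continuous_deriv (by simp)
  -- continuity helpers on Icc 1 T
  have hxne : ∀ x ∈ Icc (1:ℝ) T, x ≠ 0 := fun x hx => ne_of_gt (lt_of_lt_of_le one_pos hx.1)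
  have hrpow : ∀ q : ℝ, ContinuousOn (fun x : ℝ => x ^ q) (Icc 1 T) := fun q =>
    ContinuousOn.rpow_const continuousOn_id (fun x hx => Or.inl (hxne x hx))
  -- the maximum of ψ
  have hψc : ContinuousOn (fun s : ℝ => s ^ β * |f s|) (Icc 1 T) :=
    (hrpow β).mul hfc.abs.continuousOn
  obtain ⟨t, htmem, htmax⟩ := isCompact_Icc.exists_isMaxOn (nonempty_Icc.2 h1T) hψc
  set M : ℝ := t ^ β * |f t| with hM
  have ht0 : (0:ℝ) < t := lt_of_lt_of_le one_pos htmem.1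
  have hMnn : 0 ≤ M := mul_nonneg (Real.rpow_nonneg ht0.le _) (abs_nonneg _)
  have hMbound : ∀ s ∈ Icc (1:ℝ) T, s ^ β * |f s| ≤ M := fun s hs => htmax hs
  set P₀ : ℝ := ∫ s in (1:ℝ)..T, s * |f s| ^ p with hP₀
  set G₀ : ℝ := ∫ s in (1:ℝ)..T, s * (deriv f s) ^ 2 with hG₀
  have hP₀nn : 0 ≤ P₀ := intervalIntegral.integral_nonneg h1T (fun s hs =>
    mul_nonneg (le_trans zero_le_one hs.1) (Real.rpow_nonneg (abs_nonneg _) _))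
  have hG₀nn : 0 ≤ G₀ := intervalIntegral.integral_nonneg h1T (fun s hs =>
    mul_nonneg (le_trans zero_le_one hs.1) (sq_nonneg _))
  -- FTC bound
  set bnd : ℝ → ℝ := fun s =>
    α * s ^ (α - 1) * (f s) ^ 2 + (s * (deriv f s) ^ 2 + s ^ (2 * α - 1) * (f s) ^ 2) with hbnd
  have hbndc : ContinuousOn bnd (Icc 1 T) :=
    ((continuousOn_const.mul (hrpow _)).mul (hfc.pow 2).continuousOn).add
      ((continuousOn_id.mul (hfd.pow 2).continuousOn).add
        ((hrpow _).mul (hfc.pow 2).continuousOn))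
  have hbndnn : ∀ s ∈ Icc (1:ℝ) T, 0 ≤ bnd s := by
    intro s hs
    have hs0 : (0:ℝ) < s := lt_of_lt_of_le one_pos hs.1
    have h1 : (0:ℝ) ≤ α * s ^ (α - 1) * (f s) ^ 2 :=
      mul_nonneg (mul_nonneg hαpos.le (Real.rpow_nonneg hs0.le _)) (sq_nonneg _)
    have h2 : (0:ℝ) ≤ s * (deriv f s) ^ 2 := mul_nonneg hs0.le (sq_nonneg _)
    have h3 : (0:ℝ) ≤ s ^ (2*α - 1) * (f s) ^ 2 :=
      mul_nonneg (Real.rpow_nonneg hs0.le _) (sq_nonneg _)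
    simp only [hbnd]; linarith
  have hFTC : ∀ a ∈ Icc (1:ℝ) T, a ^ α * (f a) ^ 2 ≤ ∫ s in (1:ℝ)..T, bnd s := by
    intro a ha
    set F' : ℝ → ℝ := fun s =>
      α * s ^ (α - 1) * (f s) ^ 2 + s ^ α * (2 * f s * deriv f s) with hF'
    have hasF : ∀ s ∈ Icc (1:ℝ) T, HasDerivAt (fun x : ℝ => x ^ α * (f x) ^ 2) (F' s) s := by
      intro s hs
      have hs0 : s ≠ 0 := hxne s hs
      have h1 : HasDerivAt (fun x : ℝ => x ^ α) (α * s ^ (α - 1)) s :=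
        Real.hasDerivAt_rpow_const (Or.inl hs0)
      have h2 : HasDerivAt (fun x => (f x) ^ 2) (2 * f s ^ 1 * deriv f s) s := by
        exact_mod_cast ((hf.differentiable (by simp) s).hasDerivAt).pow 2
      have h3 : HasDerivAt (fun x : ℝ => x ^ α * (f x) ^ 2) _ s := h1.mul h2
      convert h3 using 1
      simp only [hF', pow_one]
      try ring
    have hF'c : ContinuousOn F' (Icc 1 T) :=
      ((continuousOn_const.mul (hrpow _)).mul (hfc.pow 2).continuousOn).add
        ((hrpow _).mul ((continuousOn_const.mul hfc.continuousOn).mul hfd.continuousOn))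
    have hsub : Icc a T ⊆ Icc 1 T := Icc_subset_Icc_left ha.1
    have hintF' : IntervalIntegrable F' volume a T :=
      (hF'c.mono (by rw [uIcc_of_le ha.2]; exact hsub)).intervalIntegrable
    have hFTC1 : ∫ s in a..T, F' s = T ^ α * (f T) ^ 2 - a ^ α * (f a) ^ 2 := by
      apply intervalIntegral.integral_eq_sub_of_hasDerivAt
      · intro s hs
        rw [uIcc_of_le ha.2] at hs
        exact hasF s (hsub hs)
      · exact hintF'
    have hfT0 : f T = 0 := hfT T le_rfl
    have heq : a ^ α * (f a) ^ 2 = -∫ s in a..T, F' s := by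
      rw [hFTC1, hfT0]; ring
    have hintbnd : IntervalIntegrable bnd volume a T :=
      (hbndc.mono (by rw [uIcc_of_le ha.2]; exact hsub)).intervalIntegrable
    have hintbnd1a : IntervalIntegrable bnd volume 1 a :=
      (hbndc.mono (by rw [uIcc_of_le ha.1]; exact Icc_subset_Icc_right ha.2)).intervalIntegrable
    have hstep : a ^ α * (f a) ^ 2 ≤ ∫ s in a..T, bnd s := by
      rw [heq]
      have h1 : -∫ s in a..T, F' s ≤ |∫ s in a..T, F' s| := neg_le_abs _
      have h2 : |∫ s in a..T, F' s| ≤ ∫ s in a..T, |F' s| :=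
        intervalIntegral.abs_integral_le_integral_abs ha.2
      have h3 : ∫ s in a..T, |F' s| ≤ ∫ s in a..T, bnd s := by
        apply intervalIntegral.integral_mono_on ha.2 hintF'.abs hintbnd
        intro s hs
        have hs1 : (1:ℝ) ≤ s := le_trans ha.1 hs.1
        calc |F' s| ≤ |α * s ^ (α - 1) * (f s) ^ 2| + |s ^ α * (2 * f s * deriv f s)| :=
              abs_add_le _ _
          _ ≤ α * s ^ (α - 1) * (f s) ^ 2
              + (s * (deriv f s) ^ 2 + s ^ (2 * α - 1) * (f s) ^ 2) := by
            have e1 : |α * s ^ (α - 1) * (f s) ^ 2| = α * s ^ (α - 1) * (f s) ^ 2 :=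
              abs_of_nonneg (mul_nonneg (mul_nonneg hαpos.le
                (Real.rpow_nonneg (by linarith) _)) (sq_nonneg _))
            have e2 := aux_young α s (f s) (deriv f s) hs1
            rw [e1]
            exact add_le_add le_rfl e2
          _ = bnd s := rfl
      linarith
    calc a ^ α * (f a) ^ 2 ≤ ∫ s in a..T, bnd s := hstep
      _ ≤ ∫ s in (1:ℝ)..T, bnd s := by
        rw [← intervalIntegral.integral_add_adjacent_intervals hintbnd1a hintbnd]
        have h0 : 0 ≤ ∫ s in (1:ℝ)..a, bnd s :=
          intervalIntegral.integral_nonneg ha.1 (fun s hs =>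
            hbndnn s ⟨hs.1, le_trans hs.2 ha.2⟩)
        linarith
  -- integrability of pieces on [1,T]
  have hint_p : IntervalIntegrable (fun s => s * |f s| ^ p) volume 1 T := by
    apply ContinuousOn.intervalIntegrable
    rw [uIcc_of_le h1T]
    exact continuousOn_id.mul (hfc.abs.continuousOn.rpow_const (fun x _ => Or.inr hp0.le))
  have hint_d : IntervalIntegrable (fun s => s * (deriv f s) ^ 2) volume 1 T := by
    apply ContinuousOn.intervalIntegrable
    rw [uIcc_of_le h1T]
    exact continuousOn_id.mul (hfd.pow 2).continuousOn
  have hint_g1 : IntervalIntegrable (fun s => s ^ (α - 1) * (f s) ^ 2) volume 1 T := by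
    apply ContinuousOn.intervalIntegrable
    rw [uIcc_of_le h1T]
    exact (hrpow _).mul (hfc.pow 2).continuousOn
  have hint_g2 : IntervalIntegrable (fun s => s ^ (2*α - 1) * (f s) ^ 2) volume 1 T := by
    apply ContinuousOn.intervalIntegrable
    rw [uIcc_of_le h1T]
    exact (hrpow _).mul (hfc.pow 2).continuousOn
  have hint_pc : IntervalIntegrable (fun s => M ^ (2 - p : ℝ) * (s * |f s| ^ p)) volume 1 T :=
    hint_p.const_mul _
  -- weighted estimates
  have hw1 : ∫ s in (1:ℝ)..T, s ^ (α - 1) * (f s) ^ 2 ≤ M ^ (2 - p : ℝ) * P₀ := by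
    rw [hP₀, ← intervalIntegral.integral_const_mul]
    apply intervalIntegral.integral_mono_on h1T hint_g1 hint_pc
    intro s hs
    exact aux_pointwise p β (α - 1) M s (f s) hp1 hp2 hs.1
      (by rw [hα, hβ]; nlinarith) hMnn (hMbound s hs)
  have hw2 : ∫ s in (1:ℝ)..T, s ^ (2*α - 1) * (f s) ^ 2 ≤ M ^ (2 - p : ℝ) * P₀ := by
    rw [hP₀, ← intervalIntegral.integral_const_mul]
    apply intervalIntegral.integral_mono_on h1T hint_g2 hint_pc
    intro s hs
    exact aux_pointwise p β (2*α - 1) M s (f s) hp1 hp2 hs.1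
      (by rw [hα, hβ]; nlinarith) hMnn (hMbound s hs)
  -- split the bound integral
  have hsplit : ∫ s in (1:ℝ)..T, bnd s
      = α * (∫ s in (1:ℝ)..T, s ^ (α - 1) * (f s) ^ 2) + (G₀
        + ∫ s in (1:ℝ)..T, s ^ (2*α - 1) * (f s) ^ 2) := by
    rw [hG₀]
    rw [← intervalIntegral.integral_const_mul, ← intervalIntegral.integral_add hint_d hint_g2,
      ← intervalIntegral.integral_add ((hint_g1.const_mul α)) (hint_d.add hint_g2)]
    apply intervalIntegral.integral_congr
    intro s hs
    simp only [hbnd]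
    ring
  -- main inequality for M
  have hMmain : M ^ 2 ≤ ((α + 1) * P₀) * M ^ (2 - p : ℝ) + G₀ := by
    have hMt : M ^ 2 = t ^ α * (f t) ^ 2 := by
      rw [hM, mul_pow, sq_abs, rpow_sq_aux t ht0.le, show (2 * β : ℝ) = α by rw [hα, hβ]; ring]
    have h1 := hFTC t htmem
    rw [← hMt] at h1
    rw [hsplit] at h1
    have h2 : α * (∫ s in (1:ℝ)..T, s ^ (α - 1) * (f s) ^ 2)
        ≤ α * (M ^ (2 - p : ℝ) * P₀) := mul_le_mul_of_nonneg_left hw1 hαpos.le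
    nlinarith [hw2]
  -- solve
  have hsolve := aux_solve p M ((α + 1) * P₀) G₀ hp1 hp2 hMnn
    (mul_nonneg (by linarith) hP₀nn) hG₀nn hMmain
  have hfinal : r ^ β * |f r| ≤ M := hMbound r ⟨hr, hrT⟩
  calc r ^ β * |f r| ≤ M := hfinal
    _ ≤ (2 * ((α + 1) * P₀)) ^ (1 / p : ℝ) + Real.sqrt (2 * G₀) := hsolve
    _ = (2 * (α + 1) * P₀) ^ (1 / p : ℝ) + Real.sqrt (2 * G₀) := by rw [mul_assoc]

theorem stmt_17 (p : ℝ) (hp1 : 1 < p) (hp2 : p < 2) :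
    ∃ C > (0 : ℝ), ∃ R > (0 : ℝ), ∀ u : EuclideanSpace ℝ (Fin 2) → ℝ,
      ContDiff ℝ (⊤ : ℕ∞) u → HasCompactSupport u →
      (∀ x y : EuclideanSpace ℝ (Fin 2), ‖x‖ = ‖y‖ → u x = u y) →
      ∀ x : EuclideanSpace ℝ (Fin 2), R ≤ ‖x‖ →
        |u x| ≤ C * ((∫ y, ‖gradient u y‖ ^ 2)
            + ((∫ y, |u y| ^ p) ^ ((1 : ℝ) / p)) ^ 2) ^ ((1 : ℝ) / 2)
          * ‖x‖ ^ (-(6 - p) / 8) := by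
  have hp0 : (0:ℝ) < p := by linarith
  set α : ℝ := (6 - p) / 4 with hα
  have hαpos : 0 < α := div_pos (by linarith) (by norm_num)
  set κ : ℝ := (volume (Metric.ball (0 : EuclideanSpace ℝ (Fin 2)) 1)).toReal * 2 with hκ
  have hκpos : 0 < κ := by
    apply mul_pos _ two_pos
    exact ENNReal.toReal_pos (Metric.measure_ball_pos volume 0 one_pos).ne'
      measure_ball_lt_top.ne
  set C : ℝ := (2 * (α + 1) / κ) ^ (1 / p : ℝ) + Real.sqrt (2 / κ) with hC
  have hCpos : 0 < C :=
    add_pos_of_pos_of_nonneg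
      (Real.rpow_pos_of_pos (div_pos (by linarith) hκpos) _) (Real.sqrt_nonneg _)
  refine ⟨C, hCpos, 1, one_pos, ?_⟩
  intro u hu hsupp hrad x hx
  -- the radial profile f
  set e : EuclideanSpace ℝ (Fin 2) := EuclideanSpace.single 0 1 with he
  have hne : ‖e‖ = 1 := by rw [he, EuclideanSpace.norm_single]; norm_num
  have hnorm_smul : ∀ s : ℝ, ‖s • e‖ = |s| := fun s => by
    rw [norm_smul, hne, mul_one, Real.norm_eq_abs]
  set f : ℝ → ℝ := fun s => u (s • e) with hf
  have hfu : ∀ y, u y = f ‖y‖ := fun y => hrad y (‖y‖ • e)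
    (by rw [hnorm_smul, abs_of_nonneg (norm_nonneg y)])
  have hfc : ContDiff ℝ (⊤ : ℕ∞) f := hu.comp (contDiff_id.smul contDiff_const)
  -- compact support of f
  obtain ⟨Mb, hMb⟩ :=
    (hsupp : IsCompact (tsupport u)).isBounded.subset_closedBall 0
  have hfzero : ∀ s : ℝ, Mb + 1 ≤ |s| → f s = 0 := by
    intro s hs
    by_contra h
    have h1 : s • e ∈ tsupport u := subset_tsupport u h
    have h2 := hMb h1
    rw [Metric.mem_closedBall, dist_zero_right, hnorm_smul] at h2
    linarith
  have hfCS : HasCompactSupport f := by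
    apply HasCompactSupport.intro (isCompact_Icc (a := -(Mb+1)) (b := Mb+1))
    intro s hs
    rw [mem_Icc, not_and_or, not_le, not_le] at hs
    apply hfzero
    rcases hs with h | h
    · rw [le_abs]; right; linarith
    · rw [le_abs]; left; linarith
  -- derivative comparison
  have hgradnorm : ∀ y : EuclideanSpace ℝ (Fin 2), ‖gradient u y‖ = ‖fderiv ℝ u y‖ :=
    fun y => (InnerProductSpace.toDual ℝ (EuclideanSpace ℝ (Fin 2))).symm.norm_map _
  have hderiv_le : ∀ y : EuclideanSpace ℝ (Fin 2), y ≠ 0 →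
      |deriv f ‖y‖| ≤ ‖gradient u y‖ := by
    intro y hy
    have hy0 : 0 < ‖y‖ := norm_pos_iff.2 hy
    set v : EuclideanSpace ℝ (Fin 2) := ‖y‖⁻¹ • y with hv
    have hvnorm : ‖v‖ = 1 := by
      rw [hv, norm_smul, norm_inv, norm_norm, inv_mul_cancel₀ hy0.ne']
    have hfv : f = fun s => u (s • v) := by
      funext s
      exact hrad (s • e) (s • v)
        (by rw [hnorm_smul, norm_smul, hvnorm, mul_one, Real.norm_eq_abs])
    have hsv : ‖y‖ • v = y := by rw [hv, smul_smul, mul_inv_cancel₀ hy0.ne', one_smul]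
    have hd : HasDerivAt f ((fderiv ℝ u y) v) ‖y‖ := by
      rw [hfv]
      have h1 : HasFDerivAt u (fderiv ℝ u y) (‖y‖ • v) := by
        rw [hsv]; exact (hu.differentiable (by simp) y).hasFDerivAt
      have h2 : HasDerivAt (fun s : ℝ => s • v) v ‖y‖ := by
        simpa using (hasDerivAt_id (‖y‖)).smul_const v
      exact h1.comp_hasDerivAt _ h2
    rw [hd.deriv, hgradnorm y, ← Real.norm_eq_abs]
    calc ‖(fderiv ℝ u y) v‖ ≤ ‖fderiv ℝ u y‖ * ‖v‖ := (fderiv ℝ u y).le_opNorm v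
      _ = ‖fderiv ℝ u y‖ := by rw [hvnorm, mul_one]
  -- polar coordinates
  have hpolar : ∀ g : ℝ → ℝ, (∫ y : EuclideanSpace ℝ (Fin 2), g ‖y‖)
      = κ * ∫ s in Ioi (0:ℝ), s * g s := by
    intro g
    rw [MeasureTheory.integral_fun_norm_addHaar volume g, finrank_euclideanSpace_fin]
    norm_num [smul_eq_mul]
    rw [hκ, measureReal_def]
    ring
  -- integrability facts
  have hintD : Integrable (fun y : EuclideanSpace ℝ (Fin 2) => (deriv f ‖y‖) ^ 2) := by
    apply Continuous.integrable_of_hasCompactSupport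
    · exact ((hfc.continuous_deriv (by simp)).comp continuous_norm).pow 2
    · obtain ⟨c, hc⟩ :=
        (hfCS.deriv : IsCompact (tsupport (deriv f))).isBounded.subset_closedBall 0
      apply HasCompactSupport.intro
        (isCompact_closedBall (0 : EuclideanSpace ℝ (Fin 2)) c)
      intro y hy
      have hz : deriv f ‖y‖ = 0 := by
        by_contra h
        have h1 : ‖y‖ ∈ tsupport (deriv f) := subset_tsupport _ h
        have h2 := hc h1
        rw [Metric.mem_closedBall, Real.dist_eq, sub_zero] at h2
        exact hy (by
          rw [Metric.mem_closedBall, dist_zero_right]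
          exact le_trans (le_abs_self _) h2)
      rw [hz]; norm_num
  have hintG : Integrable (fun y : EuclideanSpace ℝ (Fin 2) => ‖gradient u y‖ ^ 2) := by
    have heq : (fun y : EuclideanSpace ℝ (Fin 2) => ‖gradient u y‖ ^ 2)
        = fun y => ‖fderiv ℝ u y‖ ^ 2 := funext fun y => by rw [hgradnorm y]
    rw [heq]
    apply Continuous.integrable_of_hasCompactSupport
    · exact (hu.continuous_fderiv (by simp)).norm.pow 2
    · exact (HasCompactSupport.fderiv ℝ hsupp).comp_left
        (g := fun L : EuclideanSpace ℝ (Fin 2) →L[ℝ] ℝ => ‖L‖ ^ 2) (by simp)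
  have h1Dp : IntegrableOn (fun s : ℝ => s * |f s| ^ p) (Ioi (0:ℝ)) := by
    apply Integrable.integrableOn
    apply Continuous.integrable_of_hasCompactSupport
    · exact continuous_id.mul ((hfc.continuous.abs).rpow_const (fun _ => Or.inr hp0.le))
    · apply HasCompactSupport.intro (isCompact_Icc (a := -(Mb+1)) (b := Mb+1))
      intro s hs
      rw [mem_Icc, not_and_or, not_le, not_le] at hs
      have : f s = 0 := by
        apply hfzero
        rcases hs with h | h
        · rw [le_abs]; right; linarith
        · rw [le_abs]; left; linarith
      simp [this, Real.zero_rpow hp0.ne']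
  have h1Dd : IntegrableOn (fun s : ℝ => s * (deriv f s) ^ 2) (Ioi (0:ℝ)) := by
    apply Integrable.integrableOn
    apply Continuous.integrable_of_hasCompactSupport
    · exact continuous_id.mul ((hfc.continuous_deriv (by simp)).pow 2)
    · exact (hfCS.deriv.comp_left (g := fun t : ℝ => t ^ 2) (by norm_num)).mul_left
  -- choose T
  set T : ℝ := max (Mb + 1) ‖x‖ with hT
  have hxT : ‖x‖ ≤ T := le_max_right _ _
  have h1T : (1:ℝ) ≤ T := le_trans hx hxT
  have hfT : ∀ s, T ≤ s → f s = 0 := by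
    intro s hs
    apply hfzero
    have h1 : Mb + 1 ≤ s := le_trans (le_max_left _ _) hs
    exact le_trans h1 (le_abs_self s)
  -- key estimate
  have hkey := key1d p hp1 hp2 f hfc T ‖x‖ hx hxT hfT
  -- bound the 1D integrals
  have hPle : (∫ s in (1:ℝ)..T, s * |f s| ^ p) ≤ (∫ y, |u y| ^ p) / κ := by
    have h1 : (∫ s in (1:ℝ)..T, s * |f s| ^ p) ≤ ∫ s in Ioi (0:ℝ), s * |f s| ^ p := by
      rw [intervalIntegral.integral_of_le h1T]
      apply setIntegral_mono_set h1Dp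
      · filter_upwards [ae_restrict_mem measurableSet_Ioi] with s hs
        exact mul_nonneg (le_of_lt hs) (Real.rpow_nonneg (abs_nonneg _) _)
      · exact HasSubset.Subset.eventuallyLE (fun s hs => lt_trans one_pos hs.1)
    have h2 : (∫ y, |u y| ^ p) = κ * ∫ s in Ioi (0:ℝ), s * |f s| ^ p := by
      rw [show (fun y : EuclideanSpace ℝ (Fin 2) => |u y| ^ p)
          = fun y => |f ‖y‖| ^ p from funext fun y => by rw [hfu y]]
      exact hpolar (fun s => |f s| ^ p)
    rw [h2, mul_comm, mul_div_assoc, div_self hκpos.ne', mul_one]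
    exact h1
  have hGle : (∫ s in (1:ℝ)..T, s * (deriv f s) ^ 2)
      ≤ (∫ y, ‖gradient u y‖ ^ 2) / κ := by
    have h1 : (∫ s in (1:ℝ)..T, s * (deriv f s) ^ 2)
        ≤ ∫ s in Ioi (0:ℝ), s * (deriv f s) ^ 2 := by
      rw [intervalIntegral.integral_of_le h1T]
      apply setIntegral_mono_set h1Dd
      · filter_upwards [ae_restrict_mem measurableSet_Ioi] with s hs
        exact mul_nonneg (le_of_lt hs) (sq_nonneg _)
      · exact HasSubset.Subset.eventuallyLE (fun s hs => lt_trans one_pos hs.1)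
    have h2 : (∫ y : EuclideanSpace ℝ (Fin 2), (deriv f ‖y‖) ^ 2)
        = κ * ∫ s in Ioi (0:ℝ), s * (deriv f s) ^ 2 := hpolar (fun s => (deriv f s) ^ 2)
    have h3 : (∫ y : EuclideanSpace ℝ (Fin 2), (deriv f ‖y‖) ^ 2)
        ≤ ∫ y, ‖gradient u y‖ ^ 2 := by
      apply integral_mono_ae hintD hintG
      rw [Filter.EventuallyLE, ae_iff]
      refine measure_mono_null ?_ (measure_singleton (0 : EuclideanSpace ℝ (Fin 2)))
      intro y hy
      simp only [mem_setOf_eq, not_le] at hy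
      simp only [mem_singleton_iff]
      by_contra hy0
      have hle : (deriv f ‖y‖) ^ 2 ≤ ‖gradient u y‖ ^ 2 := by
        calc (deriv f ‖y‖) ^ 2 = |deriv f ‖y‖| ^ 2 := (sq_abs _).symm
          _ ≤ ‖gradient u y‖ ^ 2 :=
            pow_le_pow_left₀ (abs_nonneg _) (hderiv_le y hy0) 2
      linarith
    rw [le_div_iff₀ hκpos]
    calc (∫ s in (1:ℝ)..T, s * (deriv f s) ^ 2) * κ
        ≤ (∫ s in Ioi (0:ℝ), s * (deriv f s) ^ 2) * κ :=
          mul_le_mul_of_nonneg_right h1 hκpos.le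
      _ = ∫ y : EuclideanSpace ℝ (Fin 2), (deriv f ‖y‖) ^ 2 := by rw [h2]; ring
      _ ≤ _ := h3
  -- abbreviations
  set A : ℝ := ∫ y, ‖gradient u y‖ ^ 2 with hA
  set B : ℝ := (∫ y, |u y| ^ p) ^ ((1:ℝ) / p) with hB
  have hAnn : 0 ≤ A := integral_nonneg (fun y => sq_nonneg _)
  have hBnn : 0 ≤ B := Real.rpow_nonneg
    (integral_nonneg (fun y => Real.rpow_nonneg (abs_nonneg _) _)) _
  have hApnn : 0 ≤ ∫ y, |u y| ^ p :=
    integral_nonneg (fun y => Real.rpow_nonneg (abs_nonneg _) _)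
  set N : ℝ := (A + B ^ 2) ^ ((1:ℝ) / 2) with hN
  have hNsqrt : N = Real.sqrt (A + B ^ 2) := (Real.sqrt_eq_rpow _).symm
  have hBN : B ≤ N := by
    rw [hNsqrt]
    calc B = Real.sqrt (B ^ 2) := (Real.sqrt_sq hBnn).symm
      _ ≤ Real.sqrt (A + B ^ 2) := Real.sqrt_le_sqrt (by linarith)
  have hAN : Real.sqrt A ≤ N := by
    rw [hNsqrt]
    exact Real.sqrt_le_sqrt (by nlinarith)
  -- bound the two terms
  have hPint : 0 ≤ ∫ s in (1:ℝ)..T, s * |f s| ^ p :=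
    intervalIntegral.integral_nonneg h1T (fun s hs =>
      mul_nonneg (le_trans zero_le_one hs.1) (Real.rpow_nonneg (abs_nonneg _) _))
  have hGint : 0 ≤ ∫ s in (1:ℝ)..T, s * (deriv f s) ^ 2 :=
    intervalIntegral.integral_nonneg h1T (fun s hs =>
      mul_nonneg (le_trans zero_le_one hs.1) (sq_nonneg _))
  have hBp : (∫ y, |u y| ^ p) = B ^ p := by
    rw [hB, ← Real.rpow_mul hApnn, one_div, inv_mul_cancel₀ hp0.ne', Real.rpow_one]
  have ht1 : (2 * (α + 1) * ∫ s in (1:ℝ)..T, s * |f s| ^ p) ^ (1 / p : ℝ)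
      ≤ (2 * (α + 1) / κ) ^ (1 / p : ℝ) * B := by
    have h1 : 2 * (α + 1) * (∫ s in (1:ℝ)..T, s * |f s| ^ p)
        ≤ (2 * (α + 1) / κ) * B ^ p := by
      rw [← hBp]
      calc 2 * (α + 1) * (∫ s in (1:ℝ)..T, s * |f s| ^ p)
          ≤ 2 * (α + 1) * ((∫ y, |u y| ^ p) / κ) :=
            mul_le_mul_of_nonneg_left hPle (by linarith)
        _ = (2 * (α + 1) / κ) * (∫ y, |u y| ^ p) := by ring
    calc (2 * (α + 1) * ∫ s in (1:ℝ)..T, s * |f s| ^ p) ^ (1 / p : ℝ)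
        ≤ ((2 * (α + 1) / κ) * B ^ p) ^ (1 / p : ℝ) :=
          Real.rpow_le_rpow (by positivity) h1 (by positivity)
      _ = (2 * (α + 1) / κ) ^ (1 / p : ℝ) * (B ^ p) ^ (1 / p : ℝ) :=
          Real.mul_rpow (by positivity) (Real.rpow_nonneg hBnn _)
      _ = (2 * (α + 1) / κ) ^ (1 / p : ℝ) * B := by
          rw [← Real.rpow_mul hBnn, mul_one_div, div_self hp0.ne', Real.rpow_one]
  have ht2 : Real.sqrt (2 * ∫ s in (1:ℝ)..T, s * (deriv f s) ^ 2)
      ≤ Real.sqrt (2 / κ) * Real.sqrt A := by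
    rw [← Real.sqrt_mul (by positivity) A]
    apply Real.sqrt_le_sqrt
    calc 2 * (∫ s in (1:ℝ)..T, s * (deriv f s) ^ 2) ≤ 2 * (A / κ) := by linarith [hGle]
      _ = 2 / κ * A := by ring
  -- conclude
  have hmain : ‖x‖ ^ ((6 - p) / 8 : ℝ) * |f ‖x‖| ≤ C * N := by
    calc ‖x‖ ^ ((6 - p) / 8 : ℝ) * |f ‖x‖|
        ≤ (2 * (α + 1) * ∫ s in (1:ℝ)..T, s * |f s| ^ p) ^ (1 / p : ℝ)
          + Real.sqrt (2 * ∫ s in (1:ℝ)..T, s * (deriv f s) ^ 2) := hkey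
      _ ≤ (2 * (α + 1) / κ) ^ (1 / p : ℝ) * B + Real.sqrt (2 / κ) * Real.sqrt A :=
          add_le_add ht1 ht2
      _ ≤ (2 * (α + 1) / κ) ^ (1 / p : ℝ) * N + Real.sqrt (2 / κ) * N :=
          add_le_add
            (mul_le_mul_of_nonneg_left hBN (Real.rpow_nonneg (by positivity) _))
            (mul_le_mul_of_nonneg_left hAN (Real.sqrt_nonneg _))
      _ = C * N := by rw [hC]; ring
  have hr0 : (0:ℝ) < ‖x‖ := lt_of_lt_of_le one_pos hx
  have hrβpos : (0:ℝ) < ‖x‖ ^ ((6 - p) / 8 : ℝ) := Real.rpow_pos_of_pos hr0 _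
  have hexp : ‖x‖ ^ (-(6 - p) / 8) = (‖x‖ ^ ((6 - p) / 8 : ℝ))⁻¹ := by
    rw [show (-(6 - p) / 8 : ℝ) = -((6 - p) / 8) by ring, Real.rpow_neg hr0.le]
  calc |u x| = (‖x‖ ^ ((6 - p) / 8 : ℝ) * |f ‖x‖|) * (‖x‖ ^ ((6 - p) / 8 : ℝ))⁻¹ := by
        rw [hfu x, mul_comm (‖x‖ ^ ((6 - p) / 8 : ℝ)) _, mul_assoc,
          mul_inv_cancel₀ hrβpos.ne', mul_one]
    _ ≤ (C * N) * (‖x‖ ^ ((6 - p) / 8 : ℝ))⁻¹ :=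
        mul_le_mul_of_nonneg_right hmain (inv_nonneg.2 hrβpos.le)
    _ = C * N * ‖x‖ ^ (-(6 - p) / 8) := by rw [hexp]
end
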